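/- arXiv:2509.06841 — 2 statements merged into one kernel-verified Lean document; each statement's English description precedes it below -/
import Mathlib

section
/- Let G and H be finite simple graphs such that H has at least one vertex, and let h be a surjective p-morphism from Pos(G) onto Pos(H) satisfying h(V^G) ⊆ V^H. Then for every edge e = uv of G, the set {h(e_1), h(e_2)} equals {(g(u)g(v))_1, (g(u)g(v))_2}, where g : V^G → V^H is the restriction of h to V^G; in particular, g(u)g(v) is an edge of H. -/
/-- The carrier of the poset `Pos(G)`: vertices, two copies of the vertices,
two copies of the edges, and four auxiliary elements. -/
inductive PosElem (V E : Type) : Type where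
  | ver (v : V)
  | verA (v : V)
  | verB (v : V)
  | edge1 (e : E)
  | edge2 (e : E)
  | top1
  | top2
  | infA
  | infB

/-- The covering relation of the poset `Pos(G)`, for a graph `G` together with a
choice `ε` of an ordered pair of endpoints for each edge. -/
inductive PosCov {V : Type} (G : SimpleGraph V) (ε : ↥G.edgeSet → V × V) :
    PosElem V ↥G.edgeSet → PosElem V ↥G.edgeSet → Prop where
  | ver_verA (v : V) : PosCov G ε (.ver v) (.verA v)
  | ver_verB (v : V) : PosCov G ε (.ver v) (.verB v)
  | verA_infA (v : V) : PosCov G ε (.verA v) .infA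
  | verB_infB (v : V) : PosCov G ε (.verB v) .infB
  | edge1_top1 (e : ↥G.edgeSet) : PosCov G ε (.edge1 e) .top1
  | edge1_top2 (e : ↥G.edgeSet) : PosCov G ε (.edge1 e) .top2
  | edge2_top1 (e : ↥G.edgeSet) : PosCov G ε (.edge2 e) .top1
  | edge2_top2 (e : ↥G.edgeSet) : PosCov G ε (.edge2 e) .top2
  | isolA_top1 (v : V) (hv : ∀ w, ¬ G.Adj v w) : PosCov G ε (.verA v) .top1
  | isolA_top2 (v : V) (hv : ∀ w, ¬ G.Adj v w) : PosCov G ε (.verA v) .top2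
  | isolB_top1 (v : V) (hv : ∀ w, ¬ G.Adj v w) : PosCov G ε (.verB v) .top1
  | isolB_top2 (v : V) (hv : ∀ w, ¬ G.Adj v w) : PosCov G ε (.verB v) .top2
  | ua_edge1 (e : ↥G.edgeSet) : PosCov G ε (.verA (ε e).1) (.edge1 e)
  | vb_edge1 (e : ↥G.edgeSet) : PosCov G ε (.verB (ε e).2) (.edge1 e)
  | ub_edge2 (e : ↥G.edgeSet) : PosCov G ε (.verB (ε e).1) (.edge2 e)
  | va_edge2 (e : ↥G.edgeSet) : PosCov G ε (.verA (ε e).2) (.edge2 e)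

/-- The order of `Pos(G)`: the reflexive-transitive closure of the covering relation. -/
def PosLe {V : Type} (G : SimpleGraph V) (ε : ↥G.edgeSet → V × V)
    (x y : PosElem V ↥G.edgeSet) : Prop :=
  Relation.ReflTransGen (PosCov G ε) x y

/-- `ε` assigns to every edge an ordered pair of its two endpoints. -/
def OrientOK {V : Type} (G : SimpleGraph V) (ε : ↥G.edgeSet → V × V) : Prop :=
  ∀ e : ↥G.edgeSet, (e : Sym2 V) = s((ε e).1, (ε e).2)

/-- A p-morphism with respect to given order relations: the homomorphism property (HP)
and the backward property (BP). -/
def IsPMorphismRel {α β : Type} (leP : α → α → Prop) (leQ : β → β → Prop)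
    (h : α → β) : Prop :=
  (∀ x y, leP x y → leQ (h x) (h y)) ∧
  (∀ (x : α) (y : β), leQ (h x) y → ∃ z : α, leP x z ∧ h z = y)

/-!
A p-morphism `h` maps the maximal elements above `x` onto the maximal elements above `h x`.
The maximal elements of `Pos(G)` are `⊤₁, ⊤₂, ∞_a, ∞_b`, and every element lies below one of
them, so a surjective `h` restricts to a bijection between these four elements of `Pos(G)` and
of `Pos(H)`; hence `h` preserves the number of maximal elements above a point. That number is
4 on `V`, 3 on `V_a ∪ V_b`, 2 on edge copies and 1 on maximal elements. So `h` sends edge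
copies to edge copies, and `v_a, v_b` to `g(v)_a, g(v)_b` in an order that does not depend on
`v`, being decided by whether `h(∞_a) = ∞_a` or `h(∞_a) = ∞_b`. Finally, an edge copy of `f`
is determined by the `a`-vertex and the `b`-vertex below it, which are the two ends of `f`.
-/

namespace PosElem

variable {V E : Type}

def maxima : Set (PosElem V E) := {top1, top2, infA, infB}

def numMaximaAbove : PosElem V E → ℕ
  | ver _ => 4
  | verA _ | verB _ => 3
  | edge1 _ | edge2 _ => 2
  | top1 | top2 | infA | infB => 1

theorem ncard_maxima : (maxima : Set (PosElem V E)).ncard = 4 := by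
  simp [maxima, Set.ncard_insert_of_notMem]

theorem numMaximaAbove_eq_two_iff {x : PosElem V E} :
    x.numMaximaAbove = 2 ↔ ∃ f, x = edge1 f ∨ x = edge2 f := by
  cases x <;> simp [numMaximaAbove]

theorem numMaximaAbove_eq_three_iff {x : PosElem V E} :
    x.numMaximaAbove = 3 ↔ ∃ w, x = verA w ∨ x = verB w := by
  cases x <;> simp [numMaximaAbove]

end PosElem

open PosElem

def maximaAbove {V : Type} (G : SimpleGraph V) (ε : ↥G.edgeSet → V × V)
    (x : PosElem V ↥G.edgeSet) : Set (PosElem V ↥G.edgeSet) :=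
  {m ∈ maxima | PosLe G ε x m}

namespace PosLe

variable {V : Type} {G : SimpleGraph V} {ε : ↥G.edgeSet → V × V}

theorem of_cov {x y : PosElem V ↥G.edgeSet} (hc : PosCov G ε x y) : PosLe G ε x y :=
  Relation.ReflTransGen.single hc

theorem trans {x y z : PosElem V ↥G.edgeSet} (hxy : PosLe G ε x y) (hyz : PosLe G ε y z) :
    PosLe G ε x z :=
  Relation.ReflTransGen.trans hxy hyz

theorem eq_of_le_verA {x : PosElem V ↥G.edgeSet} {w : V} (hle : PosLe G ε x (.verA w)) :
    x = .verA w ∨ x = .ver w := by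
  induction hle using Relation.ReflTransGen.head_induction_on with
  | refl => exact .inl rfl
  | head hc _ ih => rcases ih with rfl | rfl <;> cases hc; exact .inr rfl

theorem eq_of_le_verB {x : PosElem V ↥G.edgeSet} {w : V} (hle : PosLe G ε x (.verB w)) :
    x = .verB w ∨ x = .ver w := by
  induction hle using Relation.ReflTransGen.head_induction_on with
  | refl => exact .inl rfl
  | head hc _ ih => rcases ih with rfl | rfl <;> cases hc; exact .inr rfl

theorem eq_of_le_edge1 {x : PosElem V ↥G.edgeSet} {f : ↥G.edgeSet}
    (hle : PosLe G ε x (.edge1 f)) :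
    x = .edge1 f ∨ x = .verA (ε f).1 ∨ x = .verB (ε f).2 ∨
      x = .ver (ε f).1 ∨ x = .ver (ε f).2 := by
  induction hle using Relation.ReflTransGen.head_induction_on with
  | refl => exact .inl rfl
  | head hc _ ih => rcases ih with rfl | rfl | rfl | rfl | rfl <;> cases hc <;> simp

theorem eq_of_le_edge2 {x : PosElem V ↥G.edgeSet} {f : ↥G.edgeSet}
    (hle : PosLe G ε x (.edge2 f)) :
    x = .edge2 f ∨ x = .verB (ε f).1 ∨ x = .verA (ε f).2 ∨
      x = .ver (ε f).1 ∨ x = .ver (ε f).2 := by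
  induction hle using Relation.ReflTransGen.head_induction_on with
  | refl => exact .inl rfl
  | head hc _ ih => rcases ih with rfl | rfl | rfl | rfl | rfl <;> cases hc <;> simp

theorem le_infA_iff {x : PosElem V ↥G.edgeSet} :
    PosLe G ε x infA ↔ x = infA ∨ (∃ w, x = verA w) ∨ ∃ w, x = ver w := by
  refine ⟨fun hle => ?_, ?_⟩
  · induction hle using Relation.ReflTransGen.head_induction_on with
    | refl => exact .inl rfl
    | head hc _ ih => rcases ih with rfl | ⟨w, rfl⟩ | ⟨w, rfl⟩ <;> cases hc <;> simp
  · rintro (rfl | ⟨w, rfl⟩ | ⟨w, rfl⟩)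
    · exact .refl
    · exact of_cov (.verA_infA w)
    · exact (of_cov (.verA_infA w)).head (.ver_verA w)

theorem le_infB_iff {x : PosElem V ↥G.edgeSet} :
    PosLe G ε x infB ↔ x = infB ∨ (∃ w, x = verB w) ∨ ∃ w, x = ver w := by
  refine ⟨fun hle => ?_, ?_⟩
  · induction hle using Relation.ReflTransGen.head_induction_on with
    | refl => exact .inl rfl
    | head hc _ ih => rcases ih with rfl | ⟨w, rfl⟩ | ⟨w, rfl⟩ <;> cases hc <;> simp
  · rintro (rfl | ⟨w, rfl⟩ | ⟨w, rfl⟩)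
    · exact .refl
    · exact of_cov (.verB_infB w)
    · exact (of_cov (.verB_infB w)).head (.ver_verB w)

theorem edge1_le_top {t : PosElem V ↥G.edgeSet} (ht : t = top1 ∨ t = top2) (f : ↥G.edgeSet) :
    PosLe G ε (edge1 f) t := by
  rcases ht with rfl | rfl
  exacts [of_cov (.edge1_top1 f), of_cov (.edge1_top2 f)]

theorem edge2_le_top {t : PosElem V ↥G.edgeSet} (ht : t = top1 ∨ t = top2) (f : ↥G.edgeSet) :
    PosLe G ε (edge2 f) t := by
  rcases ht with rfl | rfl
  exacts [of_cov (.edge2_top1 f), of_cov (.edge2_top2 f)]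

theorem verA_le_top (hε : OrientOK G ε) {t : PosElem V ↥G.edgeSet} (ht : t = top1 ∨ t = top2)
    (w : V) : PosLe G ε (verA w) t := by
  by_cases hw : ∀ w', ¬ G.Adj w w'
  · rcases ht with rfl | rfl
    exacts [of_cov (.isolA_top1 w hw), of_cov (.isolA_top2 w hw)]
  obtain ⟨w', hww'⟩ := not_forall_not.mp hw
  let f : ↥G.edgeSet := ⟨s(w, w'), hww'⟩
  rcases Sym2.eq_iff.mp (hε f) with ⟨hw, -⟩ | ⟨hw, -⟩
  · exact (edge1_le_top ht f).head (hw ▸ .ua_edge1 f)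
  · exact (edge2_le_top ht f).head (hw ▸ .va_edge2 f)

theorem verB_le_top (hε : OrientOK G ε) {t : PosElem V ↥G.edgeSet} (ht : t = top1 ∨ t = top2)
    (w : V) : PosLe G ε (verB w) t := by
  by_cases hw : ∀ w', ¬ G.Adj w w'
  · rcases ht with rfl | rfl
    exacts [of_cov (.isolB_top1 w hw), of_cov (.isolB_top2 w hw)]
  obtain ⟨w', hww'⟩ := not_forall_not.mp hw
  let f : ↥G.edgeSet := ⟨s(w, w'), hww'⟩
  rcases Sym2.eq_iff.mp (hε f) with ⟨hw, -⟩ | ⟨hw, -⟩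
  · exact (edge2_le_top ht f).head (hw ▸ .ub_edge2 f)
  · exact (edge1_le_top ht f).head (hw ▸ .vb_edge1 f)

theorem eq_of_mem_maxima {m y : PosElem V ↥G.edgeSet} (hm : m ∈ maxima)
    (hle : PosLe G ε m y) : y = m := by
  induction hle with
  | refl => rfl
  | tail _ hc ih => subst ih; rcases hm with rfl | rfl | rfl | rfl <;> cases hc

theorem exists_mem_maxima (x : PosElem V ↥G.edgeSet) : ∃ m ∈ maxima, PosLe G ε x m := by
  cases x with
  | ver v => exact ⟨infA, by simp [maxima], (of_cov (.verA_infA v)).head (.ver_verA v)⟩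
  | verA v => exact ⟨infA, by simp [maxima], of_cov (.verA_infA v)⟩
  | verB v => exact ⟨infB, by simp [maxima], of_cov (.verB_infB v)⟩
  | edge1 e => exact ⟨top1, by simp [maxima], of_cov (.edge1_top1 e)⟩
  | edge2 e => exact ⟨top1, by simp [maxima], of_cov (.edge2_top1 e)⟩
  | _ => exact ⟨_, by simp [maxima], .refl⟩

theorem mem_maxima_iff {x : PosElem V ↥G.edgeSet} :
    x ∈ maxima ↔ ∀ y, PosLe G ε x y → y = x := by
  refine ⟨fun hx _ => eq_of_mem_maxima hx, fun hmax => ?_⟩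
  obtain ⟨m, hm, hxm⟩ := exists_mem_maxima (ε := ε) x
  exact hmax m hxm ▸ hm

theorem le_top_of_notMem_maxima (hε : OrientOK G ε) {x t : PosElem V ↥G.edgeSet}
    (hx : x ∉ maxima) (ht : t = top1 ∨ t = top2) : PosLe G ε x t := by
  cases x with
  | ver w => exact (verA_le_top hε ht w).head (.ver_verA w)
  | verA w => exact verA_le_top hε ht w
  | verB w => exact verB_le_top hε ht w
  | edge1 f => exact edge1_le_top ht f
  | edge2 f => exact edge2_le_top ht f
  | _ => simp [maxima] at hx

theorem le_top_iff (hε : OrientOK G ε) {x t : PosElem V ↥G.edgeSet} (ht : t = top1 ∨ t = top2) :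
    PosLe G ε x t ↔ x = t ∨ x ∉ maxima := by
  refine ⟨fun hle => or_iff_not_imp_right.mpr fun hx => ?_, ?_⟩
  · exact (eq_of_mem_maxima (not_not.mp hx) hle).symm
  rintro (rfl | hx)
  exacts [.refl, le_top_of_notMem_maxima hε hx ht]

theorem mem_maximaAbove_iff {x m : PosElem V ↥G.edgeSet} :
    m ∈ maximaAbove G ε x ↔ (m = top1 ∧ PosLe G ε x top1) ∨ (m = top2 ∧ PosLe G ε x top2) ∨
      (m = infA ∧ PosLe G ε x infA) ∨ (m = infB ∧ PosLe G ε x infB) := by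
  simp only [maximaAbove, maxima, Set.mem_ofPred_eq, Set.mem_insert_iff, Set.mem_singleton_iff]
  aesop

theorem maximaAbove_ver (hε : OrientOK G ε) (w : V) : maximaAbove G ε (ver w) = maxima := by
  ext m
  simp [mem_maximaAbove_iff, le_infA_iff, le_infB_iff, le_top_iff hε, maxima]

theorem maximaAbove_verA (hε : OrientOK G ε) (w : V) :
    maximaAbove G ε (verA w) = {top1, top2, infA} := by
  ext m
  simp [mem_maximaAbove_iff, le_infA_iff, le_infB_iff, le_top_iff hε, maxima]

theorem maximaAbove_verB (hε : OrientOK G ε) (w : V) :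
    maximaAbove G ε (verB w) = {top1, top2, infB} := by
  ext m
  simp [mem_maximaAbove_iff, le_infA_iff, le_infB_iff, le_top_iff hε, maxima]

theorem maximaAbove_edge1 (f : ↥G.edgeSet) : maximaAbove G ε (edge1 f) = {top1, top2} := by
  ext m
  simp [mem_maximaAbove_iff, le_infA_iff, le_infB_iff, edge1_le_top]

theorem maximaAbove_edge2 (f : ↥G.edgeSet) : maximaAbove G ε (edge2 f) = {top1, top2} := by
  ext m
  simp [mem_maximaAbove_iff, le_infA_iff, le_infB_iff, edge2_le_top]

theorem maximaAbove_of_mem_maxima {m : PosElem V ↥G.edgeSet} (hm : m ∈ maxima) :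
    maximaAbove G ε m = {m} := by
  ext y
  exact ⟨fun hy => eq_of_mem_maxima hm hy.2, by rintro rfl; exact ⟨hm, .refl⟩⟩

theorem ncard_maximaAbove (hε : OrientOK G ε) (x : PosElem V ↥G.edgeSet) :
    (maximaAbove G ε x).ncard = x.numMaximaAbove := by
  cases x
  case ver w => rw [maximaAbove_ver hε, ncard_maxima]; rfl
  all_goals first
    | rw [maximaAbove_of_mem_maxima (by simp [maxima]), Set.ncard_singleton]; rfl
    | simp [maximaAbove_verA hε, maximaAbove_verB hε, maximaAbove_edge1, maximaAbove_edge2,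
        Set.ncard_insert_of_notMem, numMaximaAbove]

theorem eq_verA_of_le_infA {w : V} {y : PosElem V ↥G.edgeSet} (hw : PosLe G ε (ver w) y)
    (hy : y.numMaximaAbove = 3) (hA : PosLe G ε y infA) : y = verA w := by
  obtain ⟨w', rfl | rfl⟩ := numMaximaAbove_eq_three_iff.mp hy
  · rcases eq_of_le_verA hw with h | h <;> simp_all
  · simp [le_infA_iff] at hA

theorem eq_verB_of_le_infB {w : V} {y : PosElem V ↥G.edgeSet} (hw : PosLe G ε (ver w) y)
    (hy : y.numMaximaAbove = 3) (hB : PosLe G ε y infB) : y = verB w := by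
  obtain ⟨w', rfl | rfl⟩ := numMaximaAbove_eq_three_iff.mp hy
  · simp [le_infB_iff] at hB
  · rcases eq_of_le_verB hw with h | h <;> simp_all

theorem eq_of_verA_verB_le {a b : V} {c : PosElem V ↥G.edgeSet} {f : ↥G.edgeSet}
    (hc : c = edge1 f ∨ c = edge2 f) (ha : PosLe G ε (verA a) c) (hb : PosLe G ε (verB b) c) :
    (c = edge1 f ∧ ε f = (a, b)) ∨ (c = edge2 f ∧ ε f = (b, a)) := by
  rcases hc with rfl | rfl
  · have ha' := eq_of_le_edge1 ha
    have hb' := eq_of_le_edge1 hb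
    simp only [reduceCtorEq, verA.injEq, verB.injEq, false_or, or_false] at ha' hb'
    simp [Prod.ext_iff, ha', hb']
  · have ha' := eq_of_le_edge2 ha
    have hb' := eq_of_le_edge2 hb
    simp only [reduceCtorEq, verA.injEq, verB.injEq, false_or, or_false] at ha' hb'
    simp [Prod.ext_iff, ha', hb']

theorem exists_edge_of_le_edgeCopies (hε : OrientOK G ε) {a b : V}
    {c₁ c₂ : PosElem V ↥G.edgeSet}
    (hc₁ : ∃ f, c₁ = edge1 f ∨ c₁ = edge2 f) (hc₂ : ∃ f, c₂ = edge1 f ∨ c₂ = edge2 f)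
    (h₁a : PosLe G ε (verA a) c₁) (h₁b : PosLe G ε (verB b) c₁)
    (h₂a : PosLe G ε (verB a) c₂) (h₂b : PosLe G ε (verA b) c₂) :
    ∃ f : ↥G.edgeSet, (f : Sym2 V) = s(a, b) ∧
      ({c₁, c₂} : Set (PosElem V ↥G.edgeSet)) = {edge1 f, edge2 f} := by
  obtain ⟨f₁, hc₁⟩ := hc₁
  obtain ⟨f₂, hc₂⟩ := hc₂
  have e₁ := eq_of_verA_verB_le hc₁ h₁a h₁b
  have e₂ := eq_of_verA_verB_le hc₂ h₂b h₂a
  have hf₁ : (f₁ : Sym2 V) = s(a, b) := by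
    rw [hε f₁]; rcases e₁ with ⟨-, h⟩ | ⟨-, h⟩ <;> simp [h, Sym2.eq_swap]
  have hf₂ : (f₂ : Sym2 V) = s(a, b) := by
    rw [hε f₂]; rcases e₂ with ⟨-, h⟩ | ⟨-, h⟩ <;> simp [h, Sym2.eq_swap]
  have hab : a ≠ b := G.ne_of_adj (G.mem_edgeSet.mp (hf₁ ▸ f₁.2))
  obtain rfl : f₂ = f₁ := Subtype.ext (hf₂.trans hf₁.symm)
  refine ⟨f₂, hf₁, ?_⟩
  rcases e₁ with ⟨rfl, h₁⟩ | ⟨rfl, h₁⟩ <;> rcases e₂ with ⟨rfl, h₂⟩ | ⟨rfl, h₂⟩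
  · exact absurd (congrArg Prod.fst (h₁.symm.trans h₂)) hab
  · rfl
  · exact Set.pair_comm _ _
  · exact absurd (congrArg Prod.snd (h₁.symm.trans h₂)) hab

end PosLe

namespace IsPMorphismRel

variable {VG VH : Type} {G : SimpleGraph VG} {H : SimpleGraph VH}
  {εG : ↥G.edgeSet → VG × VG} {εH : ↥H.edgeSet → VH × VH}
  {h : PosElem VG ↥G.edgeSet → PosElem VH ↥H.edgeSet}

theorem mem_maxima_map (hpm : IsPMorphismRel (PosLe G εG) (PosLe H εH) h)
    {m : PosElem VG ↥G.edgeSet} (hm : m ∈ maxima) : h m ∈ maxima :=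
  PosLe.mem_maxima_iff.mpr fun y hy => by
    obtain ⟨z, hmz, rfl⟩ := hpm.2 m y hy
    rw [PosLe.eq_of_mem_maxima hm hmz]

theorem image_maximaAbove (hpm : IsPMorphismRel (PosLe G εG) (PosLe H εH) h)
    (x : PosElem VG ↥G.edgeSet) : h '' maximaAbove G εG x = maximaAbove H εH (h x) := by
  ext y
  constructor
  · rintro ⟨m, ⟨hm, hxm⟩, rfl⟩
    exact ⟨hpm.mem_maxima_map hm, hpm.1 _ _ hxm⟩
  · rintro ⟨hy, hxy⟩
    obtain ⟨z, hxz, rfl⟩ := hpm.2 x y hxy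
    obtain ⟨m, hm, hzm⟩ := PosLe.exists_mem_maxima (ε := εG) z
    exact ⟨m, ⟨hm, hxz.trans hzm⟩, PosLe.eq_of_mem_maxima hy (hpm.1 _ _ hzm)⟩

theorem image_maxima (hpm : IsPMorphismRel (PosLe G εG) (PosLe H εH) h)
    (hsurj : Function.Surjective h) : h '' maxima = maxima := by
  refine (Set.image_subset_iff.mpr fun m hm => hpm.mem_maxima_map hm).antisymm fun y hy => ?_
  obtain ⟨x, rfl⟩ := hsurj y
  have hx : h x ∈ maximaAbove H εH (h x) := ⟨hy, .refl⟩
  rw [← hpm.image_maximaAbove] at hx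
  exact Set.image_mono (fun m hm => hm.1) hx

theorem injOn_maxima (hpm : IsPMorphismRel (PosLe G εG) (PosLe H εH) h)
    (hsurj : Function.Surjective h) : Set.InjOn h maxima :=
  Set.injOn_of_ncard_image_eq (by rw [hpm.image_maxima hsurj, ncard_maxima, ncard_maxima])
    (by simp [maxima])

section

variable (hεG : OrientOK G εG) (hεH : OrientOK H εH)
  (hpm : IsPMorphismRel (PosLe G εG) (PosLe H εH) h) (hsurj : Function.Surjective h)
include hεG hεH hpm hsurj

theorem numMaximaAbove_map (x : PosElem VG ↥G.edgeSet) :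
    (h x).numMaximaAbove = x.numMaximaAbove := by
  rw [← PosLe.ncard_maximaAbove hεH, ← hpm.image_maximaAbove,
    ((hpm.injOn_maxima hsurj).mono fun m hm => hm.1).ncard_image, PosLe.ncard_maximaAbove hεG]

theorem exists_map_edge1 (e : ↥G.edgeSet) : ∃ f, h (edge1 e) = edge1 f ∨ h (edge1 e) = edge2 f :=
  numMaximaAbove_eq_two_iff.mp (hpm.numMaximaAbove_map hεG hεH hsurj _)

theorem exists_map_edge2 (e : ↥G.edgeSet) : ∃ f, h (edge2 e) = edge1 f ∨ h (edge2 e) = edge2 f :=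
  numMaximaAbove_eq_two_iff.mp (hpm.numMaximaAbove_map hεG hεH hsurj _)

theorem image_tops (e : ↥G.edgeSet) : h '' {top1, top2} = {top1, top2} := by
  rw [← PosLe.maximaAbove_edge1 (ε := εG) e, hpm.image_maximaAbove]
  obtain ⟨f, hf | hf⟩ := exists_map_edge1 hεG hεH hpm hsurj e
  · rw [hf, PosLe.maximaAbove_edge1]
  · rw [hf, PosLe.maximaAbove_edge2]

theorem map_infs (e : ↥G.edgeSet) :
    (h infA = infA ∧ h infB = infB) ∨ (h infA = infB ∧ h infB = infA) := by
  have hinj := hpm.injOn_maxima hsurj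
  have hinf : ∀ m, m = infA ∨ m = infB → h m = infA ∨ h m = infB := by
    rintro m hm
    have hm' : m ∈ maxima := by rcases hm with rfl | rfl <;> simp [maxima]
    have hnot : h m ∉ ({top1, top2} : Set _) := by
      rw [← hpm.image_tops hεG hεH hsurj e,
        hinj.mem_image_iff (by simp [maxima, Set.insert_subset_iff]) hm']
      rcases hm with rfl | rfl <;> simp
    have := hpm.mem_maxima_map hm'
    simp [maxima] at this hnot
    tauto
  have hne : h infA ≠ h infB := fun heq => by
    simpa using hinj (by simp [maxima]) (by simp [maxima]) heq
  rcases hinf infA (.inl rfl) with hA | hA <;> rcases hinf infB (.inr rfl) with hB | hB <;>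
    simp_all

theorem map_verA_verB {g : VG → VH} (hg : ∀ v, h (ver v) = ver (g v)) (e : ↥G.edgeSet) :
    (∀ x, h (verA x) = verA (g x) ∧ h (verB x) = verB (g x)) ∨
      (∀ x, h (verA x) = verB (g x) ∧ h (verB x) = verA (g x)) := by
  have ver_le_A x : PosLe H εH (ver (g x)) (h (verA x)) :=
    hg x ▸ hpm.1 _ _ (.of_cov (.ver_verA x))
  have ver_le_B x : PosLe H εH (ver (g x)) (h (verB x)) :=
    hg x ▸ hpm.1 _ _ (.of_cov (.ver_verB x))
  have num x := hpm.numMaximaAbove_map hεG hεH hsurj x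
  have A_le x : PosLe H εH (h (verA x)) (h infA) := hpm.1 _ _ (.of_cov (.verA_infA x))
  have B_le x : PosLe H εH (h (verB x)) (h infB) := hpm.1 _ _ (.of_cov (.verB_infB x))
  rcases hpm.map_infs hεG hεH hsurj e with ⟨hA, hB⟩ | ⟨hA, hB⟩
  · refine .inl fun x => ⟨?_, ?_⟩
    · exact PosLe.eq_verA_of_le_infA (ver_le_A x) (num _) (hA ▸ A_le x)
    · exact PosLe.eq_verB_of_le_infB (ver_le_B x) (num _) (hB ▸ B_le x)
  · refine .inr fun x => ⟨?_, ?_⟩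
    · exact PosLe.eq_verB_of_le_infB (ver_le_A x) (num _) (hA ▸ A_le x)
    · exact PosLe.eq_verA_of_le_infA (ver_le_B x) (num _) (hB ▸ B_le x)

theorem exists_edge_map_edgeCopies {g : VG → VH} (hg : ∀ v, h (ver v) = ver (g v))
    (e : ↥G.edgeSet) :
    ∃ f : ↥H.edgeSet, (f : Sym2 VH) = s(g (εG e).1, g (εG e).2) ∧
      ({h (edge1 e), h (edge2 e)} : Set (PosElem VH ↥H.edgeSet)) = {edge1 f, edge2 f} := by
  have hc₁ := hpm.exists_map_edge1 hεG hεH hsurj e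
  have hc₂ := hpm.exists_map_edge2 hεG hεH hsurj e
  have le₁ := hpm.1 _ _ (.of_cov (.ua_edge1 e))
  have le₂ := hpm.1 _ _ (.of_cov (.vb_edge1 e))
  have le₃ := hpm.1 _ _ (.of_cov (.ub_edge2 e))
  have le₄ := hpm.1 _ _ (.of_cov (.va_edge2 e))
  rcases hpm.map_verA_verB hεG hεH hsurj hg e with hAB | hAB <;>
    simp only [hAB] at le₁ le₂ le₃ le₄
  · exact PosLe.exists_edge_of_le_edgeCopies hεH hc₁ hc₂ le₁ le₂ le₃ le₄
  · rw [Set.pair_comm]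
    exact PosLe.exists_edge_of_le_edgeCopies hεH hc₂ hc₁ le₃ le₄ le₁ le₂

end

end IsPMorphismRel

theorem edge_copies_image_general {VG VH : Type}
    (G : SimpleGraph VG) (H : SimpleGraph VH)
    (εG : ↥G.edgeSet → VG × VG) (hεG : OrientOK G εG)
    (εH : ↥H.edgeSet → VH × VH) (hεH : OrientOK H εH)
    (h : PosElem VG ↥G.edgeSet → PosElem VH ↥H.edgeSet)
    (hsurj : Function.Surjective h)
    (hpm : IsPMorphismRel (PosLe G εG) (PosLe H εH) h)
    (g : VG → VH) (hg : ∀ v : VG, h (PosElem.ver v) = PosElem.ver (g v)) :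
    ∀ (u v : VG) (e : ↥G.edgeSet), (e : Sym2 VG) = s(u, v) →
      H.Adj (g u) (g v) ∧
      ∃ f : ↥H.edgeSet, (f : Sym2 VH) = s(g u, g v) ∧
        ({h (PosElem.edge1 e), h (PosElem.edge2 e)} : Set (PosElem VH ↥H.edgeSet)) =
          {PosElem.edge1 f, PosElem.edge2 f} := by
  intro u v e he
  obtain ⟨f, hf, hset⟩ := hpm.exists_edge_map_edgeCopies hεG hεH hsurj hg e
  have huv : s(g (εG e).1, g (εG e).2) = s(g u, g v) := by
    rw [← Sym2.map_mk, ← Sym2.map_mk, ← hεG e, he]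
  exact ⟨H.mem_edgeSet.mp (huv ▸ hf ▸ f.2), f, hf.trans huv, hset⟩

theorem edge_copies_image {VG VH : Type} [Fintype VG] [Fintype VH] [Nonempty VH]
    (G : SimpleGraph VG) (H : SimpleGraph VH)
    (εG : ↥G.edgeSet → VG × VG) (hεG : OrientOK G εG)
    (εH : ↥H.edgeSet → VH × VH) (hεH : OrientOK H εH)
    (h : PosElem VG ↥G.edgeSet → PosElem VH ↥H.edgeSet)
    (hsurj : Function.Surjective h)
    (hpm : IsPMorphismRel (PosLe G εG) (PosLe H εH) h)
    (g : VG → VH) (hg : ∀ v : VG, h (PosElem.ver v) = PosElem.ver (g v)) :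
    ∀ (u v : VG) (e : ↥G.edgeSet), (e : Sym2 VG) = s(u, v) →
      H.Adj (g u) (g v) ∧
      ∃ f : ↥H.edgeSet, (f : Sym2 VH) = s(g u, g v) ∧
        ({h (PosElem.edge1 e), h (PosElem.edge2 e)} : Set (PosElem VH ↥H.edgeSet)) =
          {PosElem.edge1 f, PosElem.edge2 f} :=
  edge_copies_image_general G H εG hεG εH hεH h hsurj hpm g hg
end

section
/- Let G and H be finite simple graphs such that H has at least one vertex, and let h be a surjective p-morphism from Pos(G) onto Pos(H). Then the map g : V^G → V^H defined by g(v) = h(v) (which is well defined since h(V^G) ⊆ V^H) is a surjective locally surjective homomorphism from G onto H. -/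
/-- A locally surjective graph homomorphism: the homomorphism property (HP) and
the backward property (BP) for graphs. -/
def IsLocallySurjHom {VG VH : Type} (G : SimpleGraph VG) (H : SimpleGraph VH)
    (g : VG → VH) : Prop :=
  (∀ u v : VG, G.Adj u v → H.Adj (g u) (g v)) ∧
  (∀ (u : VG) (w : VH), H.Adj (g u) w → ∃ v : VG, G.Adj u v ∧ g v = w)

/-!
A p-morphism maps the set of maximal elements above `x` onto the set of maximal elements
above `h x`. Both `Pos(G)` and `Pos(H)` have exactly the four maximal elements
`⊤₁, ⊤₂, ∞_a, ∞_b`, so a surjective p-morphism is injective on them and preserves the number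
of maximal elements above an element. That number is 4 exactly on vertices, 3 on their copies
`v_a, v_b` and 2 on edge elements, so `h` maps each of these classes into the corresponding
class of `Pos(H)`. Moreover `h u_a ≠ h v_b`, as `∞_a` lies above `u_a` but not above `v_b`.
Every edge element lies above exactly one `a`-copy and one `b`-copy, of the two ends of its
edge; hence `h` sends the pair of copies below an edge element of `Pos(G)` to the pair below
an edge element of `Pos(H)`, which gives (HP), and the backward property of `h` applied to
such pairs gives (BP).
-/

section PMorphism

variable {α β : Type} {r : α → α → Prop} {s : β → β → Prop} {h : α → β}

def IsMaxRel (r : α → α → Prop) (x : α) : Prop :=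
  ∀ y, r x y → y = x

def maxAbove (r : α → α → Prop) (x : α) : Set α :=
  {m | IsMaxRel r m ∧ r x m}

namespace IsPMorphismRel

theorem isMaxRel_apply (hh : IsPMorphismRel r s h) {m : α} (hm : IsMaxRel r m) :
    IsMaxRel s (h m) := by
  intro y hy
  obtain ⟨z, hz, rfl⟩ := hh.2 _ _ hy
  rw [hm z hz]

theorem maxAbove_apply [IsTrans α r] (hh : IsPMorphismRel r s h)
    (hbdd : ∀ x, (maxAbove r x).Nonempty) (x : α) :
    maxAbove s (h x) = h '' maxAbove r x := by
  ext y
  constructor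
  · rintro ⟨hy, hxy⟩
    obtain ⟨z, hxz, rfl⟩ := hh.2 _ _ hxy
    obtain ⟨m, hm, hzm⟩ := hbdd z
    exact ⟨m, ⟨hm, trans_of r hxz hzm⟩, hy _ (hh.1 _ _ hzm)⟩
  · rintro ⟨m, ⟨hm, hxm⟩, rfl⟩
    exact ⟨hh.isMaxRel_apply hm, hh.1 _ _ hxm⟩

theorem image_setOf_isMaxRel [IsTrans α r] [Std.Refl s] (hh : IsPMorphismRel r s h)
    (hsurj : Function.Surjective h) (hbdd : ∀ x, (maxAbove r x).Nonempty) :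
    h '' {m | IsMaxRel r m} = {m | IsMaxRel s m} := by
  refine (Set.image_subset_iff.2 fun m => hh.isMaxRel_apply).antisymm fun y hy => ?_
  obtain ⟨x, rfl⟩ := hsurj y
  have hmem : h x ∈ maxAbove s (h x) := ⟨hy, refl_of s _⟩
  rw [hh.maxAbove_apply hbdd] at hmem
  exact Set.image_mono (fun m hm => hm.1) hmem

theorem injOn_setOf_isMaxRel [IsTrans α r] [Std.Refl s] (hh : IsPMorphismRel r s h)
    (hsurj : Function.Surjective h) (hbdd : ∀ x, (maxAbove r x).Nonempty)
    (hfin : {m | IsMaxRel r m}.Finite)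
    (hcard : {m | IsMaxRel s m}.ncard = {m | IsMaxRel r m}.ncard) :
    Set.InjOn h {m | IsMaxRel r m} := by
  rw [← Set.ncard_image_iff hfin, hh.image_setOf_isMaxRel hsurj hbdd, hcard]

end IsPMorphismRel

end PMorphism

theorem OrientOK.adj {V : Type} {G : SimpleGraph V} {ε : ↥G.edgeSet → V × V}
    (hε : OrientOK G ε) (e : ↥G.edgeSet) : G.Adj (ε e).1 (ε e).2 := by
  rw [← G.mem_edgeSet, ← hε e]
  exact e.2

theorem OrientOK.exists_eq_of_adj {V : Type} {G : SimpleGraph V} {ε : ↥G.edgeSet → V × V}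
    (hε : OrientOK G ε) {u v : V} (hadj : G.Adj u v) :
    ∃ e : ↥G.edgeSet, ε e = (u, v) ∨ ε e = (v, u) := by
  refine ⟨⟨s(u, v), hadj⟩, ?_⟩
  have he := hε ⟨s(u, v), hadj⟩
  rw [Sym2.eq_iff] at he
  rcases he with ⟨h1, h2⟩ | ⟨h1, h2⟩
  · exact .inl (Prod.ext h1.symm h2.symm)
  · exact .inr (Prod.ext h2.symm h1.symm)

namespace PosElem

section

variable {V E : Type}

def side : Bool → V → PosElem V E
  | true, v => verA v
  | false, v => verB v

-- `x.numMaxAbove = 2` is how the lemmas below say that `x` is an edge element.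
def numMaxAbove : PosElem V E → ℕ
  | ver _ => 4
  | verA _ | verB _ => 3
  | edge1 _ | edge2 _ => 2
  | _ => 1

theorem side_inj {c d : Bool} {u v : V} :
    (side c u : PosElem V E) = side d v ↔ c = d ∧ u = v := by
  cases c <;> cases d <;> simp [side]

@[simp]
theorem numMaxAbove_side (c : Bool) (v : V) : (side c v : PosElem V E).numMaxAbove = 3 := by
  cases c <;> rfl

theorem exists_eq_ver_of_numMaxAbove_eq_four {x : PosElem V E} (hx : x.numMaxAbove = 4) :
    ∃ v, x = ver v := by
  cases x <;> simp_all [numMaxAbove]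

theorem exists_eq_side_of_numMaxAbove_eq_three {x : PosElem V E} (hx : x.numMaxAbove = 3) :
    ∃ c v, x = side c v := by
  cases x <;> first | exact ⟨true, _, rfl⟩ | exact ⟨false, _, rfl⟩ | simp [numMaxAbove] at hx

end

section

variable {V : Type} {G : SimpleGraph V} {ε : ↥G.edgeSet → V × V}

instance (G : SimpleGraph V) (ε : ↥G.edgeSet → V × V) :
    IsPreorder (PosElem V ↥G.edgeSet) (PosLe G ε) :=
  inferInstanceAs (IsPreorder _ (Relation.ReflTransGen _))

def PosLeExplicit (G : SimpleGraph V) (ε : ↥G.edgeSet → V × V) :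
    PosElem V ↥G.edgeSet → PosElem V ↥G.edgeSet → Prop
  | ver v, ver w | ver v, verA w | ver v, verB w => v = w
  | ver v, edge1 e | ver v, edge2 e => v = (ε e).1 ∨ v = (ε e).2
  | ver _, top1 | ver _, top2 | ver _, infA | ver _, infB => True
  | verA v, verA w => v = w
  | verA v, edge1 e => v = (ε e).1
  | verA v, edge2 e => v = (ε e).2
  | verA _, top1 | verA _, top2 | verA _, infA => True
  | verB v, verB w => v = w
  | verB v, edge1 e => v = (ε e).2
  | verB v, edge2 e => v = (ε e).1
  | verB _, top1 | verB _, top2 | verB _, infB => True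
  | edge1 e, edge1 f | edge2 e, edge2 f => e = f
  | edge1 _, top1 | edge1 _, top2 | edge2 _, top1 | edge2 _, top2 => True
  | top1, top1 | top2, top2 | infA, infA | infB, infB => True
  | _, _ => False

theorem _root_.PosLe.explicit {x y : PosElem V ↥G.edgeSet} (hle : PosLe G ε x y) :
    PosLeExplicit G ε x y := by
  induction hle with
  | refl => cases x <;> simp [PosLeExplicit]
  | tail _ hc ih => cases hc <;> cases x <;> simp_all [PosLeExplicit]

theorem exists_edgeElem_ge_sides_of_edge (e : ↥G.edgeSet) (c : Bool) :
    ∃ x, x.numMaxAbove = 2 ∧ PosLe G ε (side c (ε e).1) x ∧ PosLe G ε (side (!c) (ε e).2) x := by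
  cases c
  · exact ⟨edge2 e, rfl, .single (.ub_edge2 e), .single (.va_edge2 e)⟩
  · exact ⟨edge1 e, rfl, .single (.ua_edge1 e), .single (.vb_edge1 e)⟩

theorem exists_edgeElem_ge_sides (hε : OrientOK G ε) {u v : V} (hadj : G.Adj u v) (c : Bool) :
    ∃ x, x.numMaxAbove = 2 ∧ PosLe G ε (side c u) x ∧ PosLe G ε (side (!c) v) x := by
  obtain ⟨e, he | he⟩ := hε.exists_eq_of_adj hadj
  · simpa only [he] using exists_edgeElem_ge_sides_of_edge (ε := ε) e c
  · obtain ⟨x, hx, hv, hu⟩ := exists_edgeElem_ge_sides_of_edge (ε := ε) e (!c)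
    rw [he, Bool.not_not] at *
    exact ⟨x, hx, hu, hv⟩

theorem edgeElem_le_top {x t : PosElem V ↥G.edgeSet} (hx : x.numMaxAbove = 2)
    (ht : t = top1 ∨ t = top2) : PosLe G ε x t := by
  cases x <;> simp only [numMaxAbove, Nat.reduceEqDiff] at hx <;>
    rcases ht with rfl | rfl
  exacts [.single (.edge1_top1 _), .single (.edge1_top2 _), .single (.edge2_top1 _),
    .single (.edge2_top2 _)]

theorem side_le_top (hε : OrientOK G ε) (c : Bool) (v : V) {t : PosElem V ↥G.edgeSet}
    (ht : t = top1 ∨ t = top2) : PosLe G ε (side c v) t := by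
  by_cases hv : ∃ w, G.Adj v w
  · obtain ⟨w, hw⟩ := hv
    obtain ⟨x, hx, hvx, -⟩ := exists_edgeElem_ge_sides hε hw c
    exact hvx.trans (edgeElem_le_top hx ht)
  · push Not at hv
    rcases ht with rfl | rfl <;> cases c
    exacts [.single (.isolB_top1 v hv), .single (.isolA_top1 v hv),
      .single (.isolB_top2 v hv), .single (.isolA_top2 v hv)]

theorem PosLeExplicit.posLe (hε : OrientOK G ε) {x y : PosElem V ↥G.edgeSet}
    (hle : PosLeExplicit G ε x y) : PosLe G ε x y := by
  cases x <;> cases y <;> simp only [PosLeExplicit] at hle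
  case ver.ver | verA.verA | verB.verB | edge1.edge1 | edge2.edge2 => subst hle; exact .refl
  case top1.top1 | top2.top2 | infA.infA | infB.infB => exact .refl
  case ver.verA => subst hle; exact .single (.ver_verA _)
  case ver.verB => subst hle; exact .single (.ver_verB _)
  case ver.edge1 e =>
    rcases hle with rfl | rfl
    exacts [.head (.ver_verA _) (.single (.ua_edge1 e)),
      .head (.ver_verB _) (.single (.vb_edge1 e))]
  case ver.edge2 e =>
    rcases hle with rfl | rfl
    exacts [.head (.ver_verB _) (.single (.ub_edge2 e)),
      .head (.ver_verA _) (.single (.va_edge2 e))]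
  case ver.top1 v => exact .head (.ver_verA v) (side_le_top hε true v (.inl rfl))
  case ver.top2 v => exact .head (.ver_verA v) (side_le_top hε true v (.inr rfl))
  case ver.infA v => exact .head (.ver_verA v) (.single (.verA_infA v))
  case ver.infB v => exact .head (.ver_verB v) (.single (.verB_infB v))
  case verA.edge1 e => subst hle; exact .single (.ua_edge1 e)
  case verA.edge2 e => subst hle; exact .single (.va_edge2 e)
  case verA.top1 v => exact side_le_top hε true v (.inl rfl)
  case verA.top2 v => exact side_le_top hε true v (.inr rfl)
  case verA.infA v => exact .single (.verA_infA v)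
  case verB.edge1 e => subst hle; exact .single (.vb_edge1 e)
  case verB.edge2 e => subst hle; exact .single (.ub_edge2 e)
  case verB.top1 v => exact side_le_top hε false v (.inl rfl)
  case verB.top2 v => exact side_le_top hε false v (.inr rfl)
  case verB.infB v => exact .single (.verB_infB v)
  case edge1.top1 e | edge1.top2 e | edge2.top1 e | edge2.top2 e =>
    exact edgeElem_le_top rfl (by simp)

theorem posLe_iff (hε : OrientOK G ε) {x y : PosElem V ↥G.edgeSet} :
    PosLe G ε x y ↔ PosLeExplicit G ε x y :=
  ⟨PosLe.explicit, PosLeExplicit.posLe hε⟩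

theorem isMaxRel_posLe_iff {m : PosElem V ↥G.edgeSet} :
    IsMaxRel (PosLe G ε) m ↔ m = top1 ∨ m = top2 ∨ m = infA ∨ m = infB := by
  refine ⟨fun hm => ?_, ?_⟩
  · cases m
    case ver v => cases hm _ (.single (.ver_verA v))
    case verA v => cases hm _ (.single (.verA_infA v))
    case verB v => cases hm _ (.single (.verB_infB v))
    case edge1 e => cases hm _ (.single (.edge1_top1 e))
    case edge2 e => cases hm _ (.single (.edge2_top1 e))
    all_goals simp
  · rintro (rfl | rfl | rfl | rfl) y hy <;> have := hy.explicit <;> cases y <;>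
      simp_all [PosLeExplicit]

theorem ncard_setOf_isMaxRel : {m | IsMaxRel (PosLe G ε) m}.ncard = 4 := by
  simp only [isMaxRel_posLe_iff]
  change ({top1, top2, infA, infB} : Set (PosElem V ↥G.edgeSet)).ncard = 4
  simp [Set.ncard_insert_of_notMem]

theorem maxAbove_nonempty (x : PosElem V ↥G.edgeSet) : (maxAbove (PosLe G ε) x).Nonempty := by
  simp only [maxAbove, isMaxRel_posLe_iff]
  cases x
  case ver v => exact ⟨infA, by simp, .head (.ver_verA v) (.single (.verA_infA v))⟩
  case verA v => exact ⟨infA, by simp, .single (.verA_infA v)⟩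
  case verB v => exact ⟨infB, by simp, .single (.verB_infB v)⟩
  case edge1 e => exact ⟨top1, by simp, .single (.edge1_top1 e)⟩
  case edge2 e => exact ⟨top1, by simp, .single (.edge2_top1 e)⟩
  all_goals exact ⟨_, by simp, .refl⟩

theorem ncard_maxAbove (hε : OrientOK G ε) (x : PosElem V ↥G.edgeSet) :
    (maxAbove (PosLe G ε) x).ncard = x.numMaxAbove := by
  classical
  have : maxAbove (PosLe G ε) x =
      (({top1, top2, infA, infB} : Finset _).filter (PosLeExplicit G ε x) : Set _) := by
    ext m
    simp [maxAbove, isMaxRel_posLe_iff, posLe_iff hε]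
  rw [this, Set.ncard_coe_finset]
  cases x <;> simp [Finset.filter_insert, Finset.filter_singleton, PosLeExplicit, numMaxAbove]

theorem ver_le_side (c : Bool) (v : V) : PosLe G ε (ver v) (side c v) := by
  cases c
  exacts [.single (.ver_verB v), .single (.ver_verA v)]

theorem eq_of_ver_le_side {c : Bool} {u v : V} (hle : PosLe G ε (ver u) (side c v)) : u = v := by
  cases c <;> exact hle.explicit

theorem eq_of_side_le_of_side_le {x : PosElem V ↥G.edgeSet} (hx : x.numMaxAbove = 2) {c : Bool}
    {u v : V} (hu : PosLe G ε (side c u) x) (hv : PosLe G ε (side c v) x) : u = v := by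
  have hu := hu.explicit
  have hv := hv.explicit
  cases x <;> cases c <;> simp_all [numMaxAbove, side, PosLeExplicit]

theorem exists_adj_of_side_le (hε : OrientOK G ε) {x : PosElem V ↥G.edgeSet}
    (hx : x.numMaxAbove = 2) {c : Bool} {u : V} (hu : PosLe G ε (side c u) x) :
    ∃ v, PosLe G ε (side (!c) v) x ∧ G.Adj u v := by
  have hu := hu.explicit
  cases x <;> simp only [numMaxAbove, Nat.reduceEqDiff] at hx <;> cases c <;>
    simp only [side, PosLeExplicit] at hu <;> subst hu
  case edge1.false e => exact ⟨_, .single (.ua_edge1 e), (hε.adj e).symm⟩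
  case edge1.true e => exact ⟨_, .single (.vb_edge1 e), hε.adj e⟩
  case edge2.false e => exact ⟨_, .single (.va_edge2 e), hε.adj e⟩
  case edge2.true e => exact ⟨_, .single (.ub_edge2 e), (hε.adj e).symm⟩

theorem adj_of_sides_le (hε : OrientOK G ε) {x : PosElem V ↥G.edgeSet} (hx : x.numMaxAbove = 2)
    {c : Bool} {u v : V} (hu : PosLe G ε (side c u) x) (hv : PosLe G ε (side (!c) v) x) :
    G.Adj u v := by
  obtain ⟨w, hw, hadj⟩ := exists_adj_of_side_le hε hx hu
  rwa [eq_of_side_le_of_side_le hx hv hw]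

end

end PosElem

namespace IsPMorphismRel

open PosElem

variable {VG VH : Type} {G : SimpleGraph VG} {H : SimpleGraph VH}
  {εG : ↥G.edgeSet → VG × VG} {εH : ↥H.edgeSet → VH × VH}
  {h : PosElem VG ↥G.edgeSet → PosElem VH ↥H.edgeSet}

theorem injOn_setOf_isMaxRel_posLe (hpm : IsPMorphismRel (PosLe G εG) (PosLe H εH) h)
    (hsurj : Function.Surjective h) : Set.InjOn h {m | IsMaxRel (PosLe G εG) m} :=
  hpm.injOn_setOf_isMaxRel hsurj maxAbove_nonempty
    (Set.finite_of_ncard_ne_zero (by rw [ncard_setOf_isMaxRel]; decide))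
    (by rw [ncard_setOf_isMaxRel, ncard_setOf_isMaxRel])

theorem numMaxAbove_apply (hpm : IsPMorphismRel (PosLe G εG) (PosLe H εH) h)
    (hεG : OrientOK G εG) (hεH : OrientOK H εH) (hsurj : Function.Surjective h)
    (x : PosElem VG ↥G.edgeSet) : (h x).numMaxAbove = x.numMaxAbove := by
  rw [← ncard_maxAbove hεH, ← ncard_maxAbove hεG, hpm.maxAbove_apply maxAbove_nonempty,
    ((hpm.injOn_setOf_isMaxRel_posLe hsurj).mono fun _ hm => hm.1).ncard_image]

theorem apply_verA_ne_apply_verB (hpm : IsPMorphismRel (PosLe G εG) (PosLe H εH) h)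
    (hsurj : Function.Surjective h) (u v : VG) : h (verA u) ≠ h (verB v) := by
  intro heq
  have hmem : h infA ∈ h '' maxAbove (PosLe G εG) (verB v) := by
    rw [← hpm.maxAbove_apply maxAbove_nonempty, ← heq, hpm.maxAbove_apply maxAbove_nonempty]
    exact Set.mem_image_of_mem h ⟨isMaxRel_posLe_iff.2 (by simp), .single (.verA_infA u)⟩
  have hle := ((hpm.injOn_setOf_isMaxRel_posLe hsurj).mem_of_mem_image (fun _ hm => hm.1)
    (isMaxRel_posLe_iff.2 (by simp)) hmem).2
  exact hle.explicit

theorem apply_side_ne (hpm : IsPMorphismRel (PosLe G εG) (PosLe H εH) h)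
    (hsurj : Function.Surjective h) (c : Bool) (u v : VG) :
    h (side c u) ≠ h (side (!c) v) := by
  cases c
  exacts [(hpm.apply_verA_ne_apply_verB hsurj v u).symm, hpm.apply_verA_ne_apply_verB hsurj u v]

theorem exists_apply_side_eq (hpm : IsPMorphismRel (PosLe G εG) (PosLe H εH) h)
    (hεG : OrientOK G εG) (hεH : OrientOK H εH) (hsurj : Function.Surjective h)
    {u : VG} {w : VH} (hu : h (ver u) = ver w) (c : Bool) : ∃ c', h (side c u) = side c' w := by
  obtain ⟨c', w', hw'⟩ := exists_eq_side_of_numMaxAbove_eq_three (x := h (side c u))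
    (by rw [hpm.numMaxAbove_apply hεG hεH hsurj, numMaxAbove_side])
  have hle : PosLe H εH (ver w) (side c' w') := hu ▸ hw' ▸ hpm.1 _ _ (ver_le_side c u)
  rw [hw', eq_of_ver_le_side hle]
  exact ⟨c', rfl⟩

variable {g : VG → VH}

theorem exists_apply_sides_eq (hpm : IsPMorphismRel (PosLe G εG) (PosLe H εH) h)
    (hεG : OrientOK G εG) (hεH : OrientOK H εH) (hsurj : Function.Surjective h)
    (hg : ∀ v, h (ver v) = ver (g v)) {x : PosElem VG ↥G.edgeSet} (hx : x.numMaxAbove = 2)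
    {c : Bool} {u v : VG} (hu : PosLe G εG (side c u) x) (hv : PosLe G εG (side (!c) v) x) :
    ∃ c', h (side c u) = side c' (g u) ∧ h (side (!c) v) = side (!c') (g v) := by
  obtain ⟨c₁, hc₁⟩ := hpm.exists_apply_side_eq hεG hεH hsurj (hg u) c
  obtain ⟨c₂, hc₂⟩ := hpm.exists_apply_side_eq hεG hεH hsurj (hg v) (!c)
  refine ⟨c₁, hc₁, hc₂.trans (side_inj.2 ⟨Bool.eq_not_iff.2 ?_, rfl⟩)⟩
  rintro rfl
  have hx' : (h x).numMaxAbove = 2 := (hpm.numMaxAbove_apply hεG hεH hsurj x).trans hx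
  have hgu : PosLe H εH (side c₂ (g u)) (h x) := hc₁ ▸ hpm.1 _ _ hu
  have hgv : PosLe H εH (side c₂ (g v)) (h x) := hc₂ ▸ hpm.1 _ _ hv
  apply hpm.apply_side_ne hsurj c u v
  rw [hc₁, hc₂, eq_of_side_le_of_side_le hx' hgu hgv]

theorem map_adj (hpm : IsPMorphismRel (PosLe G εG) (PosLe H εH) h)
    (hεG : OrientOK G εG) (hεH : OrientOK H εH) (hsurj : Function.Surjective h)
    (hg : ∀ v, h (ver v) = ver (g v)) {u v : VG} (hadj : G.Adj u v) : H.Adj (g u) (g v) := by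
  obtain ⟨x, hx, hu, hv⟩ := exists_edgeElem_ge_sides hεG hadj true
  obtain ⟨c, hcu, hcv⟩ := hpm.exists_apply_sides_eq hεG hεH hsurj hg hx hu hv
  exact adj_of_sides_le hεH ((hpm.numMaxAbove_apply hεG hεH hsurj x).trans hx)
    (hcu ▸ hpm.1 _ _ hu) (hcv ▸ hpm.1 _ _ hv)

theorem exists_adj_apply_eq (hpm : IsPMorphismRel (PosLe G εG) (PosLe H εH) h)
    (hεG : OrientOK G εG) (hεH : OrientOK H εH) (hsurj : Function.Surjective h)
    (hg : ∀ v, h (ver v) = ver (g v)) {u : VG} {w : VH} (hadj : H.Adj (g u) w) :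
    ∃ v, G.Adj u v ∧ g v = w := by
  obtain ⟨c, hc⟩ := hpm.exists_apply_side_eq hεG hεH hsurj (hg u) true
  obtain ⟨y, hy, hcy, hwy⟩ := exists_edgeElem_ge_sides hεH hadj c
  obtain ⟨x, hux, rfl⟩ := hpm.2 _ _ (hc ▸ hcy)
  have hx : x.numMaxAbove = 2 := (hpm.numMaxAbove_apply hεG hεH hsurj x).symm.trans hy
  obtain ⟨v, hvx, huv⟩ := exists_adj_of_side_le hεG hx hux
  obtain ⟨c', hc'u, hc'v⟩ := hpm.exists_apply_sides_eq hεG hεH hsurj hg hx hux hvx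
  obtain rfl : c' = c := (side_inj.1 (hc'u.symm.trans hc)).1
  exact ⟨v, huv, eq_of_side_le_of_side_le hy (hc'v ▸ hpm.1 _ _ hvx) hwy⟩

theorem surjective_of_apply_ver (hpm : IsPMorphismRel (PosLe G εG) (PosLe H εH) h)
    (hεG : OrientOK G εG) (hεH : OrientOK H εH) (hsurj : Function.Surjective h)
    (hg : ∀ v, h (ver v) = ver (g v)) : Function.Surjective g := by
  intro w
  obtain ⟨x, hx⟩ := hsurj (ver w)
  obtain ⟨v, rfl⟩ := exists_eq_ver_of_numMaxAbove_eq_four (x := x)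
    (by rw [← hpm.numMaxAbove_apply hεG hεH hsurj, hx]; rfl)
  exact ⟨v, ver.inj ((hg v).symm.trans hx)⟩

end IsPMorphismRel

theorem restriction_is_locally_surjective_general {VG VH : Type}
    (G : SimpleGraph VG) (H : SimpleGraph VH)
    (εG : ↥G.edgeSet → VG × VG) (hεG : OrientOK G εG)
    (εH : ↥H.edgeSet → VH × VH) (hεH : OrientOK H εH)
    (h : PosElem VG ↥G.edgeSet → PosElem VH ↥H.edgeSet)
    (hsurj : Function.Surjective h)
    (hpm : IsPMorphismRel (PosLe G εG) (PosLe H εH) h) :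
    ∃ g : VG → VH, (∀ v : VG, h (PosElem.ver v) = PosElem.ver (g v)) ∧
      Function.Surjective g ∧ IsLocallySurjHom G H g := by
  choose g hg using fun v =>
    PosElem.exists_eq_ver_of_numMaxAbove_eq_four (hpm.numMaxAbove_apply hεG hεH hsurj (.ver v))
  exact ⟨g, hg, hpm.surjective_of_apply_ver hεG hεH hsurj hg,
    fun _ _ => hpm.map_adj hεG hεH hsurj hg,
    fun _ _ => hpm.exists_adj_apply_eq hεG hεH hsurj hg⟩

theorem restriction_is_locally_surjective {VG VH : Type} [Fintype VG] [Fintype VH] [Nonempty VH]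
    (G : SimpleGraph VG) (H : SimpleGraph VH)
    (εG : ↥G.edgeSet → VG × VG) (hεG : OrientOK G εG)
    (εH : ↥H.edgeSet → VH × VH) (hεH : OrientOK H εH)
    (h : PosElem VG ↥G.edgeSet → PosElem VH ↥H.edgeSet)
    (hsurj : Function.Surjective h)
    (hpm : IsPMorphismRel (PosLe G εG) (PosLe H εH) h) :
    ∃ g : VG → VH, (∀ v : VG, h (PosElem.ver v) = PosElem.ver (g v)) ∧
      Function.Surjective g ∧ IsLocallySurjHom G H g :=
  restriction_is_locally_surjective_general G H εG hεG εH hεH h hsurj hpm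
end
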